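/- Let n ≥ 1 be an integer, m ∈ (0,1), B > 0, and let I ⊆ ℝ be an open interval. Suppose u : I×ℝⁿ → (0,∞) is continuously differentiable in t and twice continuously differentiable in x, and satisfies the rescaled fast diffusion equation ∂_t u = (1/m)Δ(uᵐ) + (2/(1−m))·∇·(x·u) pointwise on I×ℝⁿ (where ∇·(x·u) = Σᵢ ∂_{xᵢ}(xᵢ u)). Then v := u/u_B satisfies, pointwise on I×ℝⁿ, ∂_t v = (1/m)·(B+|x|²)·Δ(vᵐ) + (2/(1−m))·[ x·∇(v − 2vᵐ) + (n − (2/(1−m))·|x|²/(B+|x|²))·(v − vᵐ) ]. -/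

import Mathlib

/-!
Write `W = B + |x|²` and `c = 1/(1-m)`. Then `v = u W^c` and, since `c m = c - 1`,
`vᵐ = uᵐ W^(c-1)`. The Leibniz rules for `Δ` and `x·∇`, together with the explicit gradient and
Laplacian of `W^a`, express both sides of the claimed equation, after substituting the equation
for `∂ₜu`, as the same combination of `Δ(uᵐ)`, `x·∇u`, `x·∇(uᵐ)`, `u` and `uᵐ` with coefficients
that are powers of `W`; what remains is an algebraic identity in `W^c`, `W`, `m` and `|x|²`.
-/

open MeasureTheory Filter
open scoped BigOperators ENNReal Topology

noncomputable section

/-- The `i`-th standard basis vector of `ℝⁿ`. -/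
def stdBasis (n : ℕ) (i : Fin n) : EuclideanSpace ℝ (Fin n) :=
  EuclideanSpace.single i 1

/-- The Laplacian (sum of second partial derivatives) of `f : ℝⁿ → ℝ`. -/
def lap (n : ℕ) (f : EuclideanSpace ℝ (Fin n) → ℝ) (x : EuclideanSpace ℝ (Fin n)) : ℝ :=
  ∑ i : Fin n, fderiv ℝ (fun y => fderiv ℝ f y (stdBasis n i)) x (stdBasis n i)

/-- `x · ∇f x`. -/
def gradDot (n : ℕ) (f : EuclideanSpace ℝ (Fin n) → ℝ) (x : EuclideanSpace ℝ (Fin n)) : ℝ :=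
  ∑ i : Fin n, x i * fderiv ℝ f x (stdBasis n i)

/-- The moment parameter `p = 2/(1-m) - n`. -/
def pPar (n : ℕ) (m : ℝ) : ℝ := 2 / (1 - m) - n

/-- The scaling exponent `β = (1 + n/p)/2`. -/
def betaPar (n : ℕ) (m : ℝ) : ℝ := (1 + n / pPar n m) / 2

/-- The Barenblatt profile `u_B(x) = (B + |x|²)^{-1/(1-m)}`. -/
def uB (n : ℕ) (m B : ℝ) (x : EuclideanSpace ℝ (Fin n)) : ℝ :=
  (B + ‖x‖ ^ 2) ^ (-(1 / (1 - m)))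

/-- The Barenblatt solution `ρ_B(τ,y) = (1+2pτ)^{-nβ} u_B((1+2pτ)^{-β} y)`. -/
def rhoB (n : ℕ) (m B : ℝ) (τ : ℝ) (y : EuclideanSpace ℝ (Fin n)) : ℝ :=
  (1 + 2 * pPar n m * τ) ^ (-(n : ℝ) * betaPar n m) *
    uB n m B ((1 + 2 * pPar n m * τ) ^ (-betaPar n m) • y)

/-- A (positive, continuous up to time 0, smooth for positive times) solution of the
fast diffusion equation `∂_τ ρ = (1/m) Δ (ρ^m)` on `[0,∞) × ℝⁿ`. -/
def IsFDESol (n : ℕ) (m : ℝ) (ρ : ℝ → EuclideanSpace ℝ (Fin n) → ℝ) : Prop :=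
  (∀ τ ∈ Set.Ici (0 : ℝ), ∀ y, 0 < ρ τ y) ∧
  ContinuousOn (fun q : ℝ × EuclideanSpace ℝ (Fin n) => ρ q.1 q.2)
    (Set.Ici 0 ×ˢ Set.univ) ∧
  ContDiffOn ℝ (⊤ : ℕ∞) (fun q : ℝ × EuclideanSpace ℝ (Fin n) => ρ q.1 q.2)
    (Set.Ioi 0 ×ˢ Set.univ) ∧
  ∀ τ ∈ Set.Ioi (0 : ℝ), ∀ y,
    deriv (fun s => ρ s y) τ = (1 / m) * lap n (fun x => ρ τ x ^ m) y

variable {n : ℕ}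

lemma sum_mul_self_eq_norm_sq (x : EuclideanSpace ℝ (Fin n)) : ∑ i, x i * x i = ‖x‖ ^ 2 := by
  rw [EuclideanSpace.norm_sq_eq]
  exact Finset.sum_congr rfl fun i _ => by rw [Real.norm_eq_abs, sq_abs, sq]

lemma innerSL_stdBasis (x : EuclideanSpace ℝ (Fin n)) (i : Fin n) :
    innerSL ℝ x (stdBasis n i) = x i := by
  simp [stdBasis, EuclideanSpace.inner_single_right]

lemma proj_stdBasis (i j : Fin n) :
    EuclideanSpace.proj (𝕜 := ℝ) j (stdBasis n i) = if j = i then 1 else 0 := by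
  simp [stdBasis, PiLp.single_apply]

lemma hasFDerivAt_coord (j : Fin n) (x : EuclideanSpace ℝ (Fin n)) :
    HasFDerivAt (fun z : EuclideanSpace ℝ (Fin n) => z j) (EuclideanSpace.proj (𝕜 := ℝ) j) x :=
  (EuclideanSpace.proj (𝕜 := ℝ) j).hasFDerivAt

lemma fderiv_coord_apply_stdBasis (i j : Fin n) (x : EuclideanSpace ℝ (Fin n)) :
    fderiv ℝ (fun z : EuclideanSpace ℝ (Fin n) => z j) x (stdBasis n i)
      = if j = i then 1 else 0 := by
  rw [(hasFDerivAt_coord j x).fderiv, proj_stdBasis]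

lemma differentiable_fderiv_apply {f : EuclideanSpace ℝ (Fin n) → ℝ} (hf : ContDiff ℝ 2 f)
    (v : EuclideanSpace ℝ (Fin n)) : Differentiable ℝ (fun y => fderiv ℝ f y v) :=
  ((hf.fderiv_right (m := 1) (by norm_num)).clm_apply contDiff_const).differentiable
    (by norm_num)

section Leibniz

variable {f g : EuclideanSpace ℝ (Fin n) → ℝ} {x : EuclideanSpace ℝ (Fin n)}

lemma gradDot_sub (hf : DifferentiableAt ℝ f x) (hg : DifferentiableAt ℝ g x) :
    gradDot n (fun z => f z - g z) x = gradDot n f x - gradDot n g x := by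
  simp only [gradDot, fderiv_fun_sub hf hg, sub_apply, mul_sub, Finset.sum_sub_distrib]

lemma gradDot_const_mul (c : ℝ) (hf : DifferentiableAt ℝ f x) :
    gradDot n (fun z => c * f z) x = c * gradDot n f x := by
  simp only [gradDot, fderiv_const_mul hf, smul_apply, smul_eq_mul, Finset.mul_sum]
  exact Finset.sum_congr rfl fun i _ => by ring

lemma gradDot_mul (hf : DifferentiableAt ℝ f x) (hg : DifferentiableAt ℝ g x) :
    gradDot n (fun z => f z * g z) x = gradDot n f x * g x + f x * gradDot n g x := by
  simp only [gradDot, fderiv_fun_mul hf hg, add_apply, smul_apply, smul_eq_mul, Finset.sum_mul,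
    Finset.mul_sum, ← Finset.sum_add_distrib]
  exact Finset.sum_congr rfl fun i _ => by ring

lemma sum_fderiv_coord_mul (hf : DifferentiableAt ℝ f x) :
    ∑ i : Fin n, fderiv ℝ (fun z => z i * f z) x (stdBasis n i) = gradDot n f x + n * f x := by
  simp only [fun i => fderiv_fun_mul (hasFDerivAt_coord i x).differentiableAt hf, add_apply,
    smul_apply, smul_eq_mul, fderiv_coord_apply_stdBasis, if_true, mul_one,
    Finset.sum_add_distrib, Finset.sum_const, Finset.card_univ, Fintype.card_fin, nsmul_eq_mul,
    gradDot]

lemma lap_mul (hf : ContDiff ℝ 2 f) (hg : ContDiff ℝ 2 g) :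
    lap n (fun z => f z * g z) x
      = lap n f x * g x + 2 * ∑ i, fderiv ℝ f x (stdBasis n i) * fderiv ℝ g x (stdBasis n i)
        + f x * lap n g x := by
  have hf1 : Differentiable ℝ f := hf.differentiable (by norm_num)
  have hg1 : Differentiable ℝ g := hg.differentiable (by norm_num)
  have hfirst (i : Fin n) : (fun y => fderiv ℝ (fun z => f z * g z) y (stdBasis n i))
      = fun y => f y * fderiv ℝ g y (stdBasis n i) + g y * fderiv ℝ f y (stdBasis n i) := by
    funext y
    simp [fderiv_fun_mul (hf1 y) (hg1 y)]
  have hsecond (i : Fin n) :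
      fderiv ℝ (fun y => fderiv ℝ (fun z => f z * g z) y (stdBasis n i)) x (stdBasis n i)
        = fderiv ℝ (fun y => fderiv ℝ f y (stdBasis n i)) x (stdBasis n i) * g x
          + 2 * (fderiv ℝ f x (stdBasis n i) * fderiv ℝ g x (stdBasis n i))
          + f x * fderiv ℝ (fun y => fderiv ℝ g y (stdBasis n i)) x (stdBasis n i) := by
    have hDf := differentiable_fderiv_apply hf (stdBasis n i) x
    have hDg := differentiable_fderiv_apply hg (stdBasis n i) x
    rw [hfirst, fderiv_fun_add ((hf1 x).fun_mul hDg) ((hg1 x).fun_mul hDf),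
      fderiv_fun_mul (hf1 x) hDg, fderiv_fun_mul (hg1 x) hDf]
    simp only [add_apply, smul_apply, smul_eq_mul]
    ring
  simp only [lap, hsecond, Finset.sum_add_distrib, Finset.sum_mul, Finset.mul_sum]

end Leibniz

section Weight

variable {B : ℝ} (hB : 0 < B) (a : ℝ) (x : EuclideanSpace ℝ (Fin n))
include hB

lemma hasFDerivAt_weight_rpow :
    HasFDerivAt (fun z : EuclideanSpace ℝ (Fin n) => (B + ‖z‖ ^ 2) ^ a)
      ((a * (B + ‖x‖ ^ 2) ^ (a - 1)) • (2 • innerSL ℝ x)) x :=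
  ((hasStrictFDerivAt_norm_sq x).hasFDerivAt.const_add B).rpow_const (Or.inl (by positivity))

lemma contDiff_weight_rpow :
    ContDiff ℝ 2 (fun z : EuclideanSpace ℝ (Fin n) => (B + ‖z‖ ^ 2) ^ a) :=
  (contDiff_const.add (contDiff_norm_sq ℝ)).rpow_const_of_ne fun _ => by positivity

lemma fderiv_weight_rpow_apply (i : Fin n) :
    fderiv ℝ (fun z : EuclideanSpace ℝ (Fin n) => (B + ‖z‖ ^ 2) ^ a) x (stdBasis n i)
      = 2 * a * ((B + ‖x‖ ^ 2) ^ (a - 1) * x i) := by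
  rw [(hasFDerivAt_weight_rpow hB a x).fderiv]
  simp only [smul_apply, innerSL_stdBasis, smul_eq_mul, nsmul_eq_mul]
  push_cast
  ring

lemma gradDot_weight_rpow :
    gradDot n (fun z : EuclideanSpace ℝ (Fin n) => (B + ‖z‖ ^ 2) ^ a) x
      = 2 * a * (B + ‖x‖ ^ 2) ^ (a - 1) * ‖x‖ ^ 2 := by
  simp only [gradDot, fderiv_weight_rpow_apply hB]
  calc ∑ i, x i * (2 * a * ((B + ‖x‖ ^ 2) ^ (a - 1) * x i))
      _ = 2 * a * (B + ‖x‖ ^ 2) ^ (a - 1) * ∑ i, x i * x i := by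
        rw [Finset.mul_sum]
        exact Finset.sum_congr rfl fun i _ => by ring
      _ = _ := by rw [sum_mul_self_eq_norm_sq]

lemma sum_fderiv_mul_fderiv_weight_rpow (f : EuclideanSpace ℝ (Fin n) → ℝ) :
    ∑ i, fderiv ℝ f x (stdBasis n i)
        * fderiv ℝ (fun z : EuclideanSpace ℝ (Fin n) => (B + ‖z‖ ^ 2) ^ a) x (stdBasis n i)
      = 2 * a * (B + ‖x‖ ^ 2) ^ (a - 1) * gradDot n f x := by
  simp only [gradDot, fderiv_weight_rpow_apply hB, Finset.mul_sum]
  exact Finset.sum_congr rfl fun i _ => by ring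

lemma lap_weight_rpow :
    lap n (fun z : EuclideanSpace ℝ (Fin n) => (B + ‖z‖ ^ 2) ^ a) x
      = 2 * a * (2 * (a - 1) * (B + ‖x‖ ^ 2) ^ (a - 2) * ‖x‖ ^ 2
          + n * (B + ‖x‖ ^ 2) ^ (a - 1)) := by
  have hsecond (i : Fin n) :
      fderiv ℝ (fun y => fderiv ℝ (fun z : EuclideanSpace ℝ (Fin n) => (B + ‖z‖ ^ 2) ^ a) y
        (stdBasis n i)) x (stdBasis n i)
        = 2 * a * (2 * (a - 1) * (B + ‖x‖ ^ 2) ^ (a - 2) * (x i * x i)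
          + (B + ‖x‖ ^ 2) ^ (a - 1)) := by
    simp only [fderiv_weight_rpow_apply hB]
    rw [fderiv_const_mul (((hasFDerivAt_weight_rpow hB (a - 1) x).differentiableAt).fun_mul
        (hasFDerivAt_coord i x).differentiableAt),
      fderiv_fun_mul (hasFDerivAt_weight_rpow hB (a - 1) x).differentiableAt
        (hasFDerivAt_coord i x).differentiableAt]
    simp only [smul_apply, add_apply, smul_eq_mul, fderiv_weight_rpow_apply hB,
      fderiv_coord_apply_stdBasis, if_true, show a - 1 - 1 = a - 2 by ring]
    ring
  simp only [lap, hsecond, ← Finset.mul_sum, Finset.sum_add_distrib, Finset.sum_const,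
    Finset.card_univ, Fintype.card_fin, nsmul_eq_mul, sum_mul_self_eq_norm_sq]

end Weight

section Barenblatt

variable {m B : ℝ} (hB : 0 < B) (x : EuclideanSpace ℝ (Fin n))
include hB

lemma div_uB_eq (y : ℝ) : y / uB n m B x = y * (B + ‖x‖ ^ 2) ^ (1 / (1 - m)) := by
  rw [uB, Real.rpow_neg (by positivity), div_inv_eq_mul]

lemma div_uB_rpow_eq (hm1 : m ≠ 1) {y : ℝ} (hy : 0 ≤ y) :
    (y / uB n m B x) ^ m = y ^ m * (B + ‖x‖ ^ 2) ^ (1 / (1 - m) - 1) := by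
  have hexp : 1 / (1 - m) * m = 1 / (1 - m) - 1 := by
    field_simp [sub_ne_zero.mpr hm1.symm]
    ring
  rw [div_uB_eq hB, Real.mul_rpow hy (by positivity), ← Real.rpow_mul (by positivity), hexp]

end Barenblatt

theorem statement17_general
    (n : ℕ) (m : ℝ) (hm0 : 0 < m) (hm1 : m < 1)
    (B : ℝ) (hB : 0 < B)
    (I : Set ℝ)
    (u : ℝ → EuclideanSpace ℝ (Fin n) → ℝ)
    (hpos : ∀ t ∈ I, ∀ x, 0 < u t x)
    (hreg_x : ∀ t ∈ I, ContDiff ℝ 2 (fun x => u t x))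
    (hPDE : ∀ t ∈ I, ∀ y,
      deriv (fun s => u s y) t =
        (1 / m) * lap n (fun x => u t x ^ m) y +
          (2 / (1 - m)) *
            ∑ i : Fin n, fderiv ℝ (fun x => x i * u t x) y (stdBasis n i)) :
    ∀ t ∈ I, ∀ x : EuclideanSpace ℝ (Fin n),
      deriv (fun s => u s x / uB n m B x) t =
        (1 / m) * (B + ‖x‖ ^ 2) * lap n (fun z => (u t z / uB n m B z) ^ m) x +
          (2 / (1 - m)) *
            (gradDot n (fun z => u t z / uB n m B z - 2 * (u t z / uB n m B z) ^ m) x +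
              ((n : ℝ) - (2 / (1 - m)) * ‖x‖ ^ 2 / (B + ‖x‖ ^ 2)) *
                (u t x / uB n m B x - (u t x / uB n m B x) ^ m)) := by
  intro t ht x
  have hu : ContDiff ℝ 2 (fun z => u t z) := hreg_x t ht
  have hum : ContDiff ℝ 2 (fun z => u t z ^ m) :=
    hu.rpow_const_of_ne fun z => (hpos t ht z).ne'
  have hu1 := hu.differentiable (by norm_num)
  have hum1 := hum.differentiable (by norm_num)
  have hW1 (a : ℝ) := (contDiff_weight_rpow (n := n) hB a).differentiable (by norm_num)
  have hvm (z : EuclideanSpace ℝ (Fin n)) := div_uB_rpow_eq hB z hm1.ne (hpos t ht z).le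
  simp only [hvm]
  simp only [div_uB_eq hB]
  rw [deriv_mul_const_field, hPDE t ht x, sum_fderiv_coord_mul (hu1 x),
    lap_mul hum (contDiff_weight_rpow hB _), lap_weight_rpow hB,
    sum_fderiv_mul_fderiv_weight_rpow hB,
    gradDot_sub ((hu1 x).fun_mul (hW1 _ x)) (((hum1 x).fun_mul (hW1 _ x)).const_mul 2),
    gradDot_const_mul _ ((hum1 x).fun_mul (hW1 _ x)), gradDot_mul (hu1 x) (hW1 _ x),
    gradDot_mul (hum1 x) (hW1 _ x), gradDot_weight_rpow hB, gradDot_weight_rpow hB]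
  have hW : 0 < B + ‖x‖ ^ 2 := by positivity
  rw [sub_sub, sub_sub, one_add_one_eq_two, show (1 : ℝ) + 2 = 3 by norm_num]
  simp only [Real.rpow_sub hW, Real.rpow_one, Real.rpow_ofNat]
  generalize (B + ‖x‖ ^ 2) ^ (1 / (1 - m)) = P
  have h1m : 1 - m ≠ 0 := sub_ne_zero.mpr hm1.ne'
  field_simp
  ring

/-- **The equation for the relative density `v = u/u_B`** (equation (eqv)):
if `u` solves the rescaled fast diffusion equation on an open interval `I`, then
`v_t = (1/m)(B+|x|²)Δ(v^m) + (2/(1-m))[x·∇(v-2v^m) + (n - (2/(1-m))|x|²/(B+|x|²))(v-v^m)]`. -/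
theorem statement17
    (n : ℕ) (hn : 1 ≤ n) (m : ℝ) (hm0 : 0 < m) (hm1 : m < 1)
    (B : ℝ) (hB : 0 < B)
    (I : Set ℝ) (hIopen : IsOpen I) (hIconn : I.OrdConnected)
    (u : ℝ → EuclideanSpace ℝ (Fin n) → ℝ)
    (hpos : ∀ t ∈ I, ∀ x, 0 < u t x)
    (hreg_t : ∀ x, ContDiffOn ℝ 1 (fun t => u t x) I)
    (hreg_x : ∀ t ∈ I, ContDiff ℝ 2 (fun x => u t x))
    (hPDE : ∀ t ∈ I, ∀ y,
      deriv (fun s => u s y) t =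
        (1 / m) * lap n (fun x => u t x ^ m) y +
          (2 / (1 - m)) *
            ∑ i : Fin n, fderiv ℝ (fun x => x i * u t x) y (stdBasis n i)) :
    ∀ t ∈ I, ∀ x : EuclideanSpace ℝ (Fin n),
      deriv (fun s => u s x / uB n m B x) t =
        (1 / m) * (B + ‖x‖ ^ 2) * lap n (fun z => (u t z / uB n m B z) ^ m) x +
          (2 / (1 - m)) *
            (gradDot n (fun z => u t z / uB n m B z - 2 * (u t z / uB n m B z) ^ m) x +
              ((n : ℝ) - (2 / (1 - m)) * ‖x‖ ^ 2 / (B + ‖x‖ ^ 2)) *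
                (u t x / uB n m B x - (u t x / uB n m B x) ^ m)) :=
  statement17_general n m hm0 hm1 B hB I u hpos hreg_x hPDE
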